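/- arXiv:2102.12842 — 2 statements merged into one kernel-verified Lean document; each statement's English description precedes it below -/
import Mathlib

section
/- There exists a subnatural encoding which is not uniform: for the functor FX = X × X × X with label set A = 3 + 3, the encoding ♭_X(x,y,z) = {(inl 0, x), (inl 1, y), (inl 2, z)} if y = z and {(inr 0, x), (inr 1, y), (inr 2, z)} if y ≠ z, is subnatural (the naturality square commutes for all injective maps), but fails the uniformity condition: there exist a set X, t ∈ FX, and x ∈ X with fil_{{1}}(♭_2(Fχ_{{x}}(t))) ≠ fil_{{x}}(♭_X(t)). -/
open scoped Classical

/-- Filter map `fil_S : B(A × X) → B(A)`, `fil_S(f)(a) = Σ_{x ∈ S} f(a,x)`. -/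
noncomputable def fil {A X : Type} (S : Set X) (f : (A × X) →₀ ℕ) : A →₀ ℕ :=
  f.sum fun p n => if p.2 ∈ S then Finsupp.single p.1 n else 0

/-- Characteristic function `χ_S : X → 2`, where `2 = Bool` with `true = 1`. -/
noncomputable def chi {X : Type} (S : Set X) : X → Bool :=
  fun x => if x ∈ S then true else false

/-- `group = curry ∘ B(swap) : B(A × X) → (B A)^(X)`. -/
noncomputable def bagGroup {A X : Type} (f : (A × X) →₀ ℕ) : X →₀ (A →₀ ℕ) :=
  Finsupp.finsuppProdEquiv (Finsupp.mapDomain Prod.swap f)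

/-- `ungroup = B(swap) ∘ uncurry : (B A)^(X) → B(A × X)`. -/
noncomputable def bagUngroup {A X : Type} (g : X →₀ (A →₀ ℕ)) : (A × X) →₀ ℕ :=
  Finsupp.mapDomain Prod.swap (Finsupp.finsuppProdEquiv.symm g)

/-- The functor `FX = X × X × X` on maps. -/
def Tmap {X Y : Type} (f : X → Y) (t : X × X × X) : Y × Y × Y :=
  (f t.1, f t.2.1, f t.2.2)

/-- The encoding of `FX = X × X × X` with labels `A = 3 + 3`. -/
noncomputable def flatT (X : Type) (t : X × X × X) : ((Fin 3 ⊕ Fin 3) × X) →₀ ℕ :=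
  if t.2.1 = t.2.2 then
    Finsupp.single (Sum.inl 0, t.1) 1 + Finsupp.single (Sum.inl 1, t.2.1) 1 +
      Finsupp.single (Sum.inl 2, t.2.2) 1
  else
    Finsupp.single (Sum.inr 0, t.1) 1 + Finsupp.single (Sum.inr 1, t.2.1) 1 +
      Finsupp.single (Sum.inr 2, t.2.2) 1

section Fil

variable {A X : Type} (S : Set X)

theorem fil_add (f g : (A × X) →₀ ℕ) : fil S (f + g) = fil S f + fil S g :=
  Finsupp.sum_add_index' (fun _ => by simp) fun p m n => by
    split_ifs <;> simp [Finsupp.single_add]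

theorem fil_single (a : A) (x : X) (n : ℕ) :
    fil S (Finsupp.single (a, x) n) = if x ∈ S then Finsupp.single a n else 0 :=
  Finsupp.sum_single_index (by simp)

end Fil

/-- Injective maps preserve and reflect the test `y = z` that selects the labels. -/
theorem mapDomain_flatT_of_injective {X Y : Type} {m : X → Y} (hm : Function.Injective m)
    (t : X × X × X) :
    Finsupp.mapDomain (Prod.map id m) (flatT X t) = flatT Y (Tmap m t) := by
  simp only [flatT, Tmap, hm.eq_iff]
  split_ifs <;> simp [Finsupp.mapDomain_add, Finsupp.mapDomain_single]

/- The counterexample: for distinct `x, y, z`, the map `χ_{x}` identifies `y` and `z`, so it moves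
the encoding of `(x, y, z)` from the `inr` labels to the `inl` labels. -/
theorem fil_flatT_true_chi_zero :
    fil {true} (flatT Bool (Tmap (chi {(0 : Fin 3)}) (0, 1, 2))) =
      Finsupp.single (Sum.inl 0) 1 := by
  simp [flatT, Tmap, chi, fil_add, fil_single]

theorem fil_flatT_zero :
    fil {(0 : Fin 3)} (flatT (Fin 3) (0, 1, 2)) = Finsupp.single (Sum.inr 0) 1 := by
  simp [flatT, fil_add, fil_single]

/-- `flatT` is a subnatural encoding which is not uniform. -/
theorem subnatural_not_uniform :
    (∀ (X Y : Type) (m : X → Y), Function.Injective m → ∀ t : X × X × X,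
      Finsupp.mapDomain (Prod.map id m) (flatT X t) = flatT Y (Tmap m t)) ∧
    (∃ (X : Type) (t : X × X × X) (x : X),
      fil {true} (flatT Bool (Tmap (chi {x}) t)) ≠ fil {x} (flatT X t)) := by
  refine ⟨fun X Y m hm => mapDomain_flatT_of_injective hm, Fin 3, (0, 1, 2), 0, ?_⟩
  rw [fil_flatT_true_chi_zero, fil_flatT_zero, Ne, Finsupp.single_left_inj one_ne_zero]
  exact Sum.inl_ne_inr
end

section
/- The main merge theorem: if F is a set functor with F1 ≠ ∅ equipped with a uniform encoding ♭ and a minimization interface merge, then for every function q : X → Y, the equation ungroup ∘ merge^(Y) ∘ group ∘ B(A × q) ∘ ♭_X = ♭_Y ∘ F q holds, where merge^(Y) applies merge pointwise to finitely supported functions Y → B(A). -/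
open scoped Classical

/-- `merge^(Y)`: pointwise application of `merge` to finitely supported functions
`Y → B(A)`. (The guard on the empty bag is vacuous under the hypotheses of the
theorem below, since a minimization interface for a subnatural encoding with
`F1 ≠ ∅` preserves the empty bag.) -/
noncomputable def mergeY {A Y : Type} (merge : (A →₀ ℕ) → (A →₀ ℕ))
    (g : Y →₀ (A →₀ ℕ)) : Y →₀ (A →₀ ℕ) :=
  Finsupp.mapRange (fun b => if b = 0 then 0 else merge b) (by simp) g

lemma fil_apply {A X : Type} (S : Set X) (f : (A × X) →₀ ℕ) (a : A) :
    fil S f a = f.sum fun p n => if p.2 ∈ S ∧ p.1 = a then n else 0 := by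
  rw [fil, Finsupp.sum_apply]
  refine Finsupp.sum_congr fun p _ => ?_
  by_cases h : p.2 ∈ S <;> by_cases h2 : p.1 = a <;>
    simp [h, h2, Finsupp.single_apply]

lemma fil_singleton_apply {A X : Type} (y : X) (f : (A × X) →₀ ℕ) (a : A) :
    fil {y} f a = f (a, y) := by
  rw [fil_apply, Finsupp.sum]
  have : ∀ p : A × X, (p.2 ∈ ({y} : Set X) ∧ p.1 = a) ↔ p = (a, y) := by
    intro p; constructor
    · rintro ⟨h1, h2⟩; ext <;> simp_all
    · rintro rfl; simp
  simp only [this]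
  rw [Finset.sum_ite_eq' f.support (a, y) (fun p => f p)]
  by_cases h : (a, y) ∈ f.support
  · simp [h]
  · simp only [h, if_false]; exact (Finsupp.notMem_support_iff.mp h).symm

lemma fil_empty {A X : Type} (f : (A × X) →₀ ℕ) : fil (∅ : Set X) f = 0 := by
  simp [fil]

lemma bagUngroup_apply {A X : Type} (g : X →₀ (A →₀ ℕ)) (a : A) (x : X) :
    bagUngroup g (a, x) = g x a := by
  rw [bagUngroup, show ((a,x) : A×X) = Prod.swap (x,a) from rfl,
    Finsupp.mapDomain_apply Prod.swap_injective]
  have h : Finsupp.finsuppProdEquiv (Finsupp.finsuppProdEquiv.symm g) = g :=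
    Equiv.apply_symm_apply _ _
  calc (Finsupp.finsuppProdEquiv.symm g) (x, a)
      = Finsupp.curry (Finsupp.finsuppProdEquiv.symm g) x a := by
        rw [Finsupp.curry_apply]
    _ = g x a := by
        rw [show Finsupp.curry (Finsupp.finsuppProdEquiv.symm g) = g from h]

lemma bagGroup_apply {A X : Type} (f : (A × X) →₀ ℕ) (x : X) (a : A) :
    bagGroup f x a = f (a, x) := by
  rw [bagGroup]
  show Finsupp.curry _ x a = _
  rw [Finsupp.curry_apply, show ((x,a) : X×A) = Prod.swap (a,x) from rfl,
    Finsupp.mapDomain_apply Prod.swap_injective]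

lemma mapDomain_prodMap_apply {A X Y : Type} (q : X → Y) (f : (A × X) →₀ ℕ)
    (a : A) (y : Y) :
    Finsupp.mapDomain (Prod.map id q) f (a, y) = fil (q ⁻¹' {y}) f a := by
  rw [Finsupp.mapDomain, Finsupp.sum_apply, fil_apply]
  refine Finsupp.sum_congr fun p _ => ?_
  rw [Finsupp.single_apply]
  by_cases h1 : q p.2 = y <;> by_cases h2 : p.1 = a <;>
    simp [Prod.ext_iff, h1, h2, Set.mem_preimage]

lemma bagGroup_mapDomain {A X Y : Type} (q : X → Y) (f : (A × X) →₀ ℕ) (y : Y) :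
    bagGroup (Finsupp.mapDomain (Prod.map id q) f) y = fil (q ⁻¹' {y}) f := by
  ext a
  rw [bagGroup_apply, mapDomain_prodMap_apply]

/-- main merge theorem:
`ungroup ∘ merge^(Y) ∘ group ∘ B(A × q) ∘ ♭_X = ♭_Y ∘ F q`. -/
theorem main_merge_theorem {A : Type} (F : Type → Type)
    (Fmap : ∀ {X Y : Type}, (X → Y) → F X → F Y)
    (Fmap_id : ∀ (X : Type) (t : F X), Fmap id t = t)
    (Fmap_comp : ∀ {X Y Z : Type} (f : X → Y) (g : Y → Z) (t : F X),
      Fmap (g ∘ f) t = Fmap g (Fmap f t))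
    (hne : Nonempty (F Unit))
    (flat : ∀ (X : Type), F X → ((A × X) →₀ ℕ))
    (huniform : ∀ (X : Type) (x : X) (t : F X),
      fil {x} (flat X t) = fil {true} (flat Bool (Fmap (chi {x}) t)))
    (merge : (A →₀ ℕ) → (A →₀ ℕ))
    (hmerge : ∀ (X : Type) (S : Set X) (t : F X),
      merge (fil S (flat X t)) = fil {true} (flat Bool (Fmap (chi S) t))) :
    ∀ (X Y : Type) (q : X → Y) (t : F X),
      bagUngroup (mergeY merge
          (bagGroup (Finsupp.mapDomain (Prod.map id q) (flat X t))))
        = flat Y (Fmap q t) := by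
  -- `merge` preserves the empty bag.
  have hmerge0 : merge 0 = 0 := by
    obtain ⟨s⟩ := hne
    -- the bag observed through the constant-false map
    set c : A →₀ ℕ := fil {true} (flat Bool (Fmap (fun _ : Unit => false) s)) with hc
    -- embed into ℕ: all points ≠ 0 observe `c`, but only finitely many can be nonzero
    have key : ∀ n : ℕ, n ≠ 0 → fil {n} (flat ℕ (Fmap (fun _ : Unit => (0:ℕ)) s)) = c := by
      intro n hn
      rw [huniform ℕ n (Fmap (fun _ : Unit => (0:ℕ)) s), ← Fmap_comp]
      have : (chi {n} ∘ fun _ : Unit => (0:ℕ)) = fun _ : Unit => false := by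
        funext u
        simp only [Function.comp, chi]
        rw [if_neg]
        simp [Set.mem_singleton_iff]
        exact fun h => hn h.symm
      rw [this, hc]
    -- pick a fresh n outside the (finite) second projection of the support
    set g := flat ℕ (Fmap (fun _ : Unit => (0:ℕ)) s) with hg
    obtain ⟨n, hn⟩ := Infinite.exists_notMem_finset
      (insert 0 (g.support.image Prod.snd))
    have hn0 : n ≠ 0 := fun h => hn (by simp [h])
    have hns : ∀ a : A, g (a, n) = 0 := by
      intro a
      by_contra h
      exact hn (Finset.mem_insert_of_mem
        (Finset.mem_image.mpr ⟨(a, n), Finsupp.mem_support_iff.mpr h, rfl⟩))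
    have hfil0 : fil {n} g = 0 := by
      ext a; rw [fil_singleton_apply]; exact hns a
    have hc0 : c = 0 := by rw [← key n hn0, hfil0]
    -- now compute merge 0 via the empty filter
    have : merge (fil (∅ : Set Unit) (flat Unit s)) =
        fil {true} (flat Bool (Fmap (chi (∅ : Set Unit)) s)) := hmerge Unit ∅ s
    rw [fil_empty] at this
    rw [this]
    have : chi (∅ : Set Unit) = fun _ : Unit => false := by
      funext u; simp [chi]
    rw [this, ← hc, hc0]
  -- key identity: `fil {y} (♭_Y (F q t)) = merge (fil (q⁻¹ y) (♭_X t))`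
  intro X Y q t
  have hkey : ∀ y : Y, fil {y} (flat Y (Fmap q t)) = merge (fil (q ⁻¹' {y}) (flat X t)) := by
    intro y
    rw [hmerge X (q ⁻¹' {y}) t, huniform Y y (Fmap q t), ← Fmap_comp]
    have : (chi {y} ∘ q) = chi (q ⁻¹' {y}) := by
      funext x; simp [chi, Set.mem_preimage]
    rw [this]
  ext p
  obtain ⟨a, y⟩ := p
  rw [bagUngroup_apply, mergeY, Finsupp.mapRange_apply, bagGroup_mapDomain]
  have := hkey y
  by_cases h : fil (q ⁻¹' {y}) (flat X t) = 0
  · rw [h, if_pos rfl]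
    have : flat Y (Fmap q t) (a, y) = fil {y} (flat Y (Fmap q t)) a :=
      (fil_singleton_apply _ _ _).symm
    rw [this, hkey y, h, hmerge0]
  · rw [if_neg h, ← hkey y, fil_singleton_apply]
end
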